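/- arXiv:2309.13244 — 8 statements merged into one kernel-verified Lean document; each statement's English description precedes it below -/
import Mathlib

section
/- Let b > 1, x > 0, c ≥ 0, and k ≥ 1. Define x_i = x·(b-1)^{k-i}·b^{i-1} / (b^k - (b-1)^k) for 1 ≤ i ≤ k. Then ∑_{i=1}^k x_i = x, each x_i > 0, and for every index i ∈ {1,…,k}, the perceived cost b·x_i + ∑_{j=i+1}^k x_j + c equals x / (1 - ((b-1)/b)^k) + c. -/
/-! The chunk sizes satisfy `b xᵢ = (b - 1) xᵢ₊₁`, i.e. `b xᵢ + xᵢ₊₁ = b xᵢ₊₁`: starting with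
chunk `i` or with chunk `i + 1` is perceived as equally costly. Hence every perceived cost equals
the last one, `b xₖ = x bᵏ / (bᵏ - (b - 1)ᵏ)`, and telescoping gives
`∑ xᵢ = b xₖ - (b - 1) x₁ = x`. -/

open Finset

section Equalization

variable {R : Type*} [CommRing R] (b : R) (w : ℕ → R) {m k : ℕ}

theorem perceived_cost_eq_last
    (hstep : ∀ i, m ≤ i → i < k → b * w i + w (i + 1) = b * w (i + 1)) :
    ∀ i ∈ Icc m k, b * w i + ∑ j ∈ Icc (i + 1) k, w j = b * w k := by
  intro i hi
  obtain ⟨hmi, hik⟩ := mem_Icc.mp hi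
  clear hi
  induction hik using Nat.decreasingInduction with
  | self => simp
  | of_succ i hik ih =>
    calc b * w i + ∑ j ∈ Icc (i + 1) k, w j
        = (b * w i + w (i + 1)) + ∑ j ∈ Icc (i + 1 + 1) k, w j := by
          rw [← insert_Icc_add_one_left_eq_Icc hik, sum_insert (by simp), ← add_assoc]
      _ = b * w k := by
          rw [hstep i hmi hik, ih (by omega)]

theorem sum_Icc_eq_of_perceived_cost_step (hmk : m ≤ k)
    (hstep : ∀ i, m ≤ i → i < k → b * w i + w (i + 1) = b * w (i + 1)) :
    ∑ j ∈ Icc m k, w j = b * w k - (b - 1) * w m := by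
  have hm := perceived_cost_eq_last b w hstep m (mem_Icc.mpr ⟨le_rfl, hmk⟩)
  rw [← insert_Icc_add_one_left_eq_Icc hmk, sum_insert (by simp)]
  linear_combination hm

end Equalization

section ChunkWeight

variable {R : Type*} [CommRing R] (b q : R) {k i : ℕ}

/-- `chunkWeight b (x / (bᵏ - (b - 1)ᵏ)) k i` is the paper's `xᵢ`. -/
def chunkWeight (k i : ℕ) : R := q * (b - 1) ^ (k - i) * b ^ (i - 1)

theorem chunkWeight_perceived_cost_step (hi : 1 ≤ i) (hik : i < k) :
    b * chunkWeight b q k i + chunkWeight b q k (i + 1) = b * chunkWeight b q k (i + 1) := by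
  obtain ⟨n, hn⟩ : ∃ n, k - i = n + 1 := ⟨k - (i + 1), by omega⟩
  obtain ⟨p, rfl⟩ : ∃ p, i = p + 1 := ⟨i - 1, by omega⟩
  rw [chunkWeight, chunkWeight, hn, show k - (p + 1 + 1) = n by omega]
  simp only [Nat.add_sub_cancel]
  ring

theorem mul_chunkWeight_last (hk : 1 ≤ k) : b * chunkWeight b q k k = q * b ^ k := by
  obtain ⟨n, rfl⟩ : ∃ n, k = n + 1 := ⟨k - 1, by omega⟩
  simp only [chunkWeight, Nat.sub_self, Nat.add_sub_cancel]
  ring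

theorem mul_chunkWeight_first (hk : 1 ≤ k) : (b - 1) * chunkWeight b q k 1 = q * (b - 1) ^ k := by
  obtain ⟨n, rfl⟩ : ∃ n, k = n + 1 := ⟨k - 1, by omega⟩
  simp only [chunkWeight, Nat.sub_self, Nat.add_sub_cancel]
  ring

end ChunkWeight

theorem stmt_2_general (b x c : ℝ) (hb : 1 < b) (hx : 0 < x)
    (k : ℕ) (hk : 1 ≤ k)
    (xi : ℕ → ℝ)
    (hxi : ∀ i ∈ Finset.Icc 1 k,
      xi i = x * (b - 1) ^ (k - i) * b ^ (i - 1) / (b ^ k - (b - 1) ^ k)) :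
    (∑ i ∈ Finset.Icc 1 k, xi i = x) ∧
    (∀ i ∈ Finset.Icc 1 k, 0 < xi i) ∧
    (∀ i ∈ Finset.Icc 1 k,
      b * xi i + (∑ j ∈ Finset.Icc (i + 1) k, xi j) + c
        = x / (1 - ((b - 1) / b) ^ k) + c) := by
  have hD : 0 < b ^ k - (b - 1) ^ k :=
    sub_pos.mpr (pow_lt_pow_left₀ (by linarith) (by linarith) (by omega))
  have hxi' : ∀ i ∈ Icc 1 k, xi i = chunkWeight b (x / (b ^ k - (b - 1) ^ k)) k i := by
    intro i hi
    rw [hxi i hi, chunkWeight]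
    ring
  have hstep : ∀ i, 1 ≤ i → i < k → b * xi i + xi (i + 1) = b * xi (i + 1) := by
    intro i hi hik
    rw [hxi' i (mem_Icc.mpr ⟨hi, hik.le⟩), hxi' (i + 1) (mem_Icc.mpr ⟨by omega, hik⟩)]
    exact chunkWeight_perceived_cost_step b _ hi hik
  have hlast : b * xi k = x / (b ^ k - (b - 1) ^ k) * b ^ k := by
    rw [hxi' k (mem_Icc.mpr ⟨hk, le_rfl⟩), mul_chunkWeight_last b _ hk]
  have hfirst : (b - 1) * xi 1 = x / (b ^ k - (b - 1) ^ k) * (b - 1) ^ k := by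
    rw [hxi' 1 (mem_Icc.mpr ⟨le_rfl, hk⟩), mul_chunkWeight_first b _ hk]
  refine ⟨?_, fun i hi => ?_, fun i hi => ?_⟩
  · rw [sum_Icc_eq_of_perceived_cost_step b xi hk hstep, hlast, hfirst, ← mul_sub]
    field_simp
  · rw [hxi i hi]
    have : 0 < b - 1 := by linarith
    positivity
  · rw [perceived_cost_eq_last b xi hstep i hi, hlast, div_pow,
      one_sub_div (pow_pos (by linarith) k).ne']
    field_simp

theorem stmt_2 (b x c : ℝ) (hb : 1 < b) (hx : 0 < x) (hc : 0 ≤ c)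
    (k : ℕ) (hk : 1 ≤ k)
    (xi : ℕ → ℝ)
    (hxi : ∀ i ∈ Finset.Icc 1 k,
      xi i = x * (b - 1) ^ (k - i) * b ^ (i - 1) / (b ^ k - (b - 1) ^ k)) :
    (∑ i ∈ Finset.Icc 1 k, xi i = x) ∧
    (∀ i ∈ Finset.Icc 1 k, 0 < xi i) ∧
    (∀ i ∈ Finset.Icc 1 k,
      b * xi i + (∑ j ∈ Finset.Icc (i + 1) k, xi j) + c
        = x / (1 - ((b - 1) / b) ^ k) + c) :=
  stmt_2_general b x c hb hx k hk xi hxi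
end

section
/- Let b > 1, x > 0, c ≥ 0, and k ≥ 1. For any nonnegative reals y₁,…,y_k with ∑_{i=1}^k y_i = x, the maximum over i of (b·y_i + ∑_{j>i} y_j + c) is at least x / (1 - ((b-1)/b)^k) + c, with equality if and only if y_i = x·(b-1)^{k-i}·b^{i-1}/(b^k - (b-1)^k) for all i. -/
/-!
Weight the perceived cost of chunk `i` by `rⁱ⁻¹`, where `r = (b - 1) / b`. Since `b (1 - r) = 1`,
every chunk cost `y j` then appears with total weight `b rʲ⁻¹ + (1 + r + ⋯ + rʲ⁻²) = b`, so the
weighted perceived costs sum to `b x` for every chunking. The weights themselves sum to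
`b (1 - rᵏ)`, so the weighted mean of the perceived costs is `x / (1 - rᵏ)`: some perceived
cost is at least the mean, and none exceeds it only if all are equal to it. Equal perceived costs
of consecutive chunks mean `b yᵢ = (b - 1) yᵢ₊₁`, and the last one is `b yₖ`, which pins down the
geometric chunking.
-/

open Finset

theorem forall_Icc_eq_pow_mul_iff {M : Type*} [Monoid M] {r a : M} {y : ℕ → M} {k : ℕ}
    (hk : 1 ≤ k) :
    (∀ i ∈ Icc 1 k, y i = r ^ (k - i) * a) ↔ y k = a ∧ ∀ i ∈ Ico 1 k, y i = r * y (i + 1) := by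
  constructor
  · intro hy
    refine ⟨by simpa using hy k (mem_Icc.2 ⟨hk, le_rfl⟩), fun i hi => ?_⟩
    obtain ⟨hi1, hik⟩ := mem_Ico.1 hi
    rw [hy i (mem_Icc.2 ⟨hi1, hik.le⟩), hy (i + 1) (mem_Icc.2 ⟨by omega, hik⟩), ← mul_assoc,
      ← pow_succ', show k - (i + 1) + 1 = k - i by omega]
  · rintro ⟨hyk, hrec⟩
    have key : ∀ d i, 1 ≤ i → i + d = k → y i = r ^ d * a := by
      intro d
      induction d with
      | zero =>
        rintro i - rfl
        simpa using hyk
      | succ d ih =>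
        intro i hi1 hid
        rw [hrec i (mem_Ico.2 ⟨hi1, by omega⟩), ih (i + 1) (by omega) (by omega), pow_succ',
          mul_assoc]
    intro i hi
    obtain ⟨hi1, hik⟩ := mem_Icc.1 hi
    exact key (k - i) i hi1 (by omega)

theorem exists_le_and_forall_le_iff_of_sum_mul_eq {ι K : Type*} [CommRing K] [LinearOrder K]
    [IsStrictOrderedRing K] {s : Finset ι} (hs : s.Nonempty) {w p : ι → K} {B : K}
    (hw : ∀ i ∈ s, 0 < w i) (h : ∑ i ∈ s, w i * p i = ∑ i ∈ s, w i * B) :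
    (∃ i ∈ s, B ≤ p i) ∧ ((∀ i ∈ s, p i ≤ B) ↔ ∀ i ∈ s, p i = B) := by
  refine ⟨?_, fun hle => ?_, fun heq i hi => (heq i hi).le⟩
  · obtain ⟨i, hi, hle⟩ := exists_le_of_sum_le hs h.ge
    exact ⟨i, hi, le_of_mul_le_mul_left hle (hw i hi)⟩
  · have hmul := (sum_eq_sum_iff_of_le fun i hi =>
      mul_le_mul_of_nonneg_left (hle i hi) (hw i hi).le).1 h
    exact fun i hi => mul_left_cancel₀ (hw i hi).ne' (hmul i hi)

section PerceivedCost

variable {R : Type*} [CommRing R]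

theorem sum_Icc_pow_pred_eq_mul_one_sub_pow {b r : R} (hbr : b * (1 - r) = 1) (k : ℕ) :
    ∑ i ∈ Icc 1 k, r ^ (i - 1) = b * (1 - r ^ k) := by
  induction k with
  | zero => simp
  | succ k ih =>
    rw [sum_Icc_succ_top (by omega), ih, Nat.add_sub_cancel]
    linear_combination (-r ^ k) * hbr

def perceivedCost (b : R) (k : ℕ) (y : ℕ → R) (i : ℕ) : R :=
  b * y i + ∑ j ∈ Icc (i + 1) k, y j

theorem perceivedCost_self (b : R) (k : ℕ) (y : ℕ → R) : perceivedCost b k y k = b * y k := by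
  simp [perceivedCost]

theorem perceivedCost_eq_perceivedCost_succ_add (b : R) (y : ℕ → R) {i k : ℕ} (hik : i + 1 ≤ k) :
    perceivedCost b k y i = perceivedCost b k y (i + 1) + (b * y i - (b - 1) * y (i + 1)) := by
  rw [perceivedCost, perceivedCost, Icc_eq_cons_Ioc hik, sum_cons, ← Icc_add_one_left_eq_Ioc]
  ring

theorem perceivedCost_succ_right (b : R) (y : ℕ → R) {i k : ℕ} (hik : i ≤ k) :
    perceivedCost b (k + 1) y i = perceivedCost b k y i + y (k + 1) := by
  rw [perceivedCost, perceivedCost, sum_Icc_succ_top (by omega), add_assoc]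

theorem sum_pow_pred_mul_perceivedCost {b r : R} (hbr : b * (1 - r) = 1) (k : ℕ) (y : ℕ → R) :
    ∑ i ∈ Icc 1 k, r ^ (i - 1) * perceivedCost b k y i = b * ∑ i ∈ Icc 1 k, y i := by
  induction k with
  | zero => simp
  | succ k ih =>
    rw [sum_Icc_succ_top (by omega), perceivedCost_self,
      sum_congr rfl fun i hi => by rw [perceivedCost_succ_right b y (mem_Icc.1 hi).2],
      sum_Icc_succ_top (by omega)]
    simp only [mul_add, sum_add_distrib, ← sum_mul, ih,
      sum_Icc_pow_pred_eq_mul_one_sub_pow hbr, Nat.add_sub_cancel]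
    ring

end PerceivedCost

theorem forall_perceivedCost_eq_iff {K : Type*} [Field K] {b : K} (hb : b ≠ 0) (B : K) {k : ℕ}
    (hk : 1 ≤ k) (y : ℕ → K) :
    (∀ i ∈ Icc 1 k, perceivedCost b k y i = B) ↔
      ∀ i ∈ Icc 1 k, y i = ((b - 1) / b) ^ (k - i) * (B / b) := by
  have hconst := forall_Icc_eq_pow_mul_iff (r := 1) (a := B) (y := perceivedCost b k y) hk
  simp only [one_pow, one_mul] at hconst
  rw [hconst, forall_Icc_eq_pow_mul_iff hk, perceivedCost_self, eq_div_iff hb, mul_comm]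
  refine and_congr Iff.rfl (forall₂_congr fun i hi => ?_)
  rw [perceivedCost_eq_perceivedCost_succ_add b y (mem_Ico.1 hi).2, add_eq_left, sub_eq_zero,
    div_mul_eq_mul_div, eq_div_iff hb, mul_comm]

theorem geometric_chunk_eq {K : Type*} [Field K] {b : K} (x : K) (hb : b ≠ 0) {k i : ℕ}
    (hbk : (b - 1) ^ k ≠ b ^ k) (hi : 1 ≤ i) (hik : i ≤ k) :
    ((b - 1) / b) ^ (k - i) * (x / (1 - ((b - 1) / b) ^ k) / b) =
      x * (b - 1) ^ (k - i) * b ^ (i - 1) / (b ^ k - (b - 1) ^ k) := by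
  obtain ⟨n, rfl⟩ : ∃ n, i = n + 1 := ⟨i - 1, by omega⟩
  obtain ⟨m, rfl⟩ : ∃ m, k = n + 1 + m := ⟨k - (n + 1), by omega⟩
  have hsub : b ^ (n + 1 + m) - (b - 1) ^ (n + 1 + m) ≠ 0 := sub_ne_zero.2 hbk.symm
  rw [Nat.add_sub_cancel_left, Nat.add_sub_cancel, div_pow, div_pow]
  field_simp
  ring

theorem stmt_3_general (b x c : ℝ) (hb : 1 < b)
    (k : ℕ) (hk : 1 ≤ k)
    (y : ℕ → ℝ)
    (hsum : ∑ i ∈ Finset.Icc 1 k, y i = x) :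
    (∃ i ∈ Finset.Icc 1 k,
      x / (1 - ((b - 1) / b) ^ k) + c
        ≤ b * y i + (∑ j ∈ Finset.Icc (i + 1) k, y j) + c) ∧
    ((∀ i ∈ Finset.Icc 1 k,
        b * y i + (∑ j ∈ Finset.Icc (i + 1) k, y j) + c
          ≤ x / (1 - ((b - 1) / b) ^ k) + c)
      ↔ (∀ i ∈ Finset.Icc 1 k,
          y i = x * (b - 1) ^ (k - i) * b ^ (i - 1) / (b ^ k - (b - 1) ^ k))) := by
  have hb0 : b ≠ 0 := by positivity
  have hr : 0 < (b - 1) / b := div_pos (by linarith) (by linarith)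
  have hbr : b * (1 - (b - 1) / b) = 1 := by field_simp; ring
  have hbk : (b - 1) ^ k ≠ b ^ k := (pow_lt_pow_left₀ (by linarith) (by linarith) (by omega)).ne
  have hrk : 1 - ((b - 1) / b) ^ k ≠ 0 := by
    rw [div_pow, sub_ne_zero, ne_comm]
    exact div_ne_one_of_ne hbk
  have hmean : ∑ i ∈ Icc 1 k, ((b - 1) / b) ^ (i - 1) * perceivedCost b k y i =
      ∑ i ∈ Icc 1 k, ((b - 1) / b) ^ (i - 1) * (x / (1 - ((b - 1) / b) ^ k)) := by
    rw [sum_pow_pred_mul_perceivedCost hbr, hsum, ← sum_mul,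
      sum_Icc_pow_pred_eq_mul_one_sub_pow hbr, mul_assoc, mul_div_cancel₀ x hrk]
  obtain ⟨hexists, hforall⟩ := exists_le_and_forall_le_iff_of_sum_mul_eq
    ⟨1, mem_Icc.2 ⟨le_rfl, hk⟩⟩ (fun i _ => pow_pos hr _) hmean
  refine ⟨?_, ?_⟩
  · obtain ⟨i, hi, hle⟩ := hexists
    exact ⟨i, hi, add_le_add_left hle c⟩
  · simp only [add_le_add_iff_right]
    refine hforall.trans ((forall_perceivedCost_eq_iff hb0 _ hk y).trans
      (forall₂_congr fun i hi => ?_))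
    rw [geometric_chunk_eq x hb0 hbk (mem_Icc.1 hi).1 (mem_Icc.1 hi).2]

theorem stmt_3 (b x c : ℝ) (hb : 1 < b) (hx : 0 < x) (hc : 0 ≤ c)
    (k : ℕ) (hk : 1 ≤ k)
    (y : ℕ → ℝ) (hy : ∀ i ∈ Finset.Icc 1 k, 0 ≤ y i)
    (hsum : ∑ i ∈ Finset.Icc 1 k, y i = x) :
    (∃ i ∈ Finset.Icc 1 k,
      x / (1 - ((b - 1) / b) ^ k) + c
        ≤ b * y i + (∑ j ∈ Finset.Icc (i + 1) k, y j) + c) ∧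
    ((∀ i ∈ Finset.Icc 1 k,
        b * y i + (∑ j ∈ Finset.Icc (i + 1) k, y j) + c
          ≤ x / (1 - ((b - 1) / b) ^ k) + c)
      ↔ (∀ i ∈ Finset.Icc 1 k,
          y i = x * (b - 1) ^ (k - i) * b ^ (i - 1) / (b ^ k - (b - 1) ^ k))) :=
  stmt_3_general b x c hb k hk y hsum
end

section
/- Let b > 1 and let c be a constant with c > 1. If k ≥ log(c^{1/n} / (c^{1/n} - 1)) / log(b/(b-1)), then (1/(1 - ((b-1)/b)^k))^n ≤ c. Moreover, as n → ∞, the threshold log(c^{1/n}/(c^{1/n}-1)) / log(b/(b-1)) is O(n). -/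
open Real Filter

theorem stmt_5 (b c : ℝ) (hb : 1 < b) (hc : 1 < c) :
    (∀ n : ℕ, 1 ≤ n → ∀ k : ℕ,
      Real.log (c ^ (1 / (n : ℝ)) / (c ^ (1 / (n : ℝ)) - 1)) / Real.log (b / (b - 1))
        ≤ (k : ℝ) →
      (1 / (1 - ((b - 1) / b) ^ k)) ^ n ≤ c) ∧
    (∃ C : ℝ, 0 < C ∧ ∃ N : ℕ, ∀ n : ℕ, N ≤ n →
      Real.log (c ^ (1 / (n : ℝ)) / (c ^ (1 / (n : ℝ)) - 1)) / Real.log (b / (b - 1))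
        ≤ C * n) := by
  have hb0 : 0 < b := lt_trans one_pos hb
  have hb1 : 0 < b - 1 := by linarith
  have hbb : 1 < b / (b - 1) := (one_lt_div hb1).mpr (by linarith)
  have hL : 0 < Real.log (b / (b - 1)) := Real.log_pos hbb
  have hc0 : 0 < c := lt_trans one_pos hc
  have hlogc : 0 < Real.log c := Real.log_pos hc
  constructor
  · intro n hn k hk
    have hn0 : 0 < (n : ℝ) := by exact_mod_cast hn
    set a : ℝ := c ^ (1 / (n : ℝ)) with ha
    have ha1 : 1 < a := by
      rw [ha]
      exact Real.one_lt_rpow_iff_of_pos hc0 |>.mpr (Or.inl ⟨hc, by positivity⟩)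
    have ha0 : 0 < a - 1 := by linarith
    have hfrac : 0 < a / (a - 1) := by positivity
    have hk' : Real.log (a / (a - 1)) ≤ k * Real.log (b / (b - 1)) :=
      (div_le_iff₀ hL).mp hk
    have hexp : a / (a - 1) ≤ (b / (b - 1)) ^ k := by
      have := Real.exp_le_exp.mpr hk'
      rwa [Real.exp_log hfrac, Real.exp_nat_mul,
        Real.exp_log (by positivity : (0:ℝ) < b / (b - 1))] at this
    have hrk : ((b - 1) / b) ^ k = ((b / (b - 1)) ^ k)⁻¹ := by
      rw [← inv_pow]
      congr 1
      field_simp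
    have hrle : ((b - 1) / b) ^ k ≤ (a - 1) / a := by
      rw [hrk]
      have h1 : (a / (a - 1))⁻¹ = (a - 1) / a := by
        rw [inv_div]
      rw [← h1]
      exact inv_anti₀ hfrac hexp
    have hden : 1 / a ≤ 1 - ((b - 1) / b) ^ k := by
      have : (a - 1) / a = 1 - 1 / a := by field_simp
      rw [this] at hrle; linarith
    have hdenpos : 0 < 1 - ((b - 1) / b) ^ k := lt_of_lt_of_le (by positivity) hden
    have hmain : 1 / (1 - ((b - 1) / b) ^ k) ≤ a := by
      have := one_div_le_one_div_of_le (by positivity : (0:ℝ) < 1 / a) hden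
      rwa [one_div_one_div] at this
    calc (1 / (1 - ((b - 1) / b) ^ k)) ^ n ≤ a ^ n :=
          pow_le_pow_left₀ (by positivity) hmain n
      _ = c := by
          rw [ha, ← Real.rpow_natCast (c ^ (1 / (n : ℝ))) n, ← Real.rpow_mul hc0.le,
            one_div, inv_mul_cancel₀ (ne_of_gt hn0), Real.rpow_one]
  · refine ⟨1, one_pos, ?_⟩
    set K : ℝ := Real.log c - Real.log (Real.log c) with hK
    have hev : ∀ᶠ x : ℝ in atTop, K + Real.log x ≤ Real.log (b / (b - 1)) * x := by
      have h1 : ∀ᶠ x : ℝ in atTop, ‖Real.log x‖ ≤ Real.log (b / (b - 1)) / 2 * ‖x‖ :=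
        Real.isLittleO_log_id_atTop.def (half_pos hL)
      have h2 : ∀ᶠ x : ℝ in atTop, K ≤ Real.log (b / (b - 1)) / 2 * x :=
        (tendsto_id.const_mul_atTop (half_pos hL)).eventually_ge_atTop K
      filter_upwards [h1, h2, eventually_ge_atTop (0:ℝ)] with x hx1 hx2 hx0
      have hlx : Real.log x ≤ Real.log (b / (b - 1)) / 2 * x := by
        calc Real.log x ≤ ‖Real.log x‖ := le_norm_self _
          _ ≤ Real.log (b / (b - 1)) / 2 * ‖x‖ := hx1
          _ = Real.log (b / (b - 1)) / 2 * x := by rw [Real.norm_of_nonneg hx0]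
      linarith
    have hnat : ∀ᶠ n : ℕ in atTop, K + Real.log n ≤ Real.log (b / (b - 1)) * n :=
      tendsto_natCast_atTop_atTop.eventually hev
    obtain ⟨N, hN⟩ := (hnat.and (eventually_ge_atTop 1)).exists_forall_of_atTop
    refine ⟨N, fun n hn => ?_⟩
    obtain ⟨hN1, hN2⟩ := hN n hn
    have hn0 : 0 < (n : ℝ) := by exact_mod_cast hN2
    set a : ℝ := c ^ (1 / (n : ℝ)) with ha
    have ha1 : 1 < a :=
      Real.one_lt_rpow_iff_of_pos hc0 |>.mpr (Or.inl ⟨hc, by positivity⟩)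
    have ha0 : 0 < a - 1 := by linarith
    have hd : Real.log c / n ≤ a - 1 := by
      have h := Real.add_one_le_exp (Real.log c * (1 / (n : ℝ)))
      rw [ha, Real.rpow_def_of_pos hc0]
      have he : Real.log c * (1 / (n : ℝ)) = Real.log c / n := by ring
      rw [he]; rw [he] at h; linarith
    have hexp1 : (1 : ℝ) / n ≤ 1 := by
      rw [div_le_one hn0]; exact_mod_cast hN2
    have hac : a ≤ c := by
      have := Real.rpow_le_rpow_of_exponent_le hc.le hexp1
      rwa [Real.rpow_one] at this
    have hfrac : a / (a - 1) ≤ c * n / Real.log c := by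
      have : c * (n : ℝ) / Real.log c = c / (Real.log c / n) := by
        field_simp
      rw [this]
      exact div_le_div₀ hc0.le hac (by positivity) hd
    have hlog : Real.log (a / (a - 1)) ≤ K + Real.log n := by
      calc Real.log (a / (a - 1)) ≤ Real.log (c * n / Real.log c) :=
            Real.log_le_log (by positivity) hfrac
        _ = K + Real.log n := by
            rw [Real.log_div (by positivity) (ne_of_gt hlogc),
              Real.log_mul (ne_of_gt hc0) (ne_of_gt hn0), hK]
            ring
    rw [div_le_iff₀ hL]
    calc Real.log (a / (a - 1)) ≤ K + Real.log n := hlog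
      _ ≤ Real.log (b / (b - 1)) * n := hN1
      _ = 1 * n * Real.log (b / (b - 1)) := by ring
end

section
/- Fix b > 1, x > 0, reals d_w ≥ 0 (cost of the external shortest path from u) and d_v ≥ 0 (cost c(v → t)), and a k-chunking with nonnegative costs x₁,…,x_k summing to x. For each index i, define the perceived cost p_i = b·x_i + min(d_w, ∑_{j>i} x_j + d_v) (with p_k = b·x_k + d_v). If all perceived costs p₁,…,p_k are equal, then for any other k-chunking x₁',…,x_k' of the same edge (nonnegative, summing to x), the maximum of the corresponding perceived costs p_i' is at least p₁. -/
open Finset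

/-- Perceived cost of chunk `i` of a `k`-chunking `x` for bias `b`, where the
continuation from intermediate chunks may go through the external path of cost
`dw`, while the last chunk commits to `v` with continuation cost `dv`. -/
noncomputable def perceived (b dw dv : ℝ) (k : ℕ) (x : ℕ → ℝ) (i : ℕ) : ℝ :=
  if i = k then b * x k + dv
  else b * x i + min dw ((∑ j ∈ Finset.Icc (i + 1) k, x j) + dv)

theorem stmt_6 (b x dw dv : ℝ) (hb : 1 < b) (hx : 0 < x)
    (hdw : 0 ≤ dw) (hdv : 0 ≤ dv) (k : ℕ) (hk : 1 ≤ k)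
    (xs : ℕ → ℝ) (hxs : ∀ i ∈ Finset.Icc 1 k, 0 ≤ xs i)
    (hsum : ∑ i ∈ Finset.Icc 1 k, xs i = x)
    (heq : ∀ i ∈ Finset.Icc 1 k, perceived b dw dv k xs i = perceived b dw dv k xs 1)
    (xs' : ℕ → ℝ) (hxs' : ∀ i ∈ Finset.Icc 1 k, 0 ≤ xs' i)
    (hsum' : ∑ i ∈ Finset.Icc 1 k, xs' i = x) :
    ∃ i ∈ Finset.Icc 1 k,
      perceived b dw dv k xs 1 ≤ perceived b dw dv k xs' i := by
  by_contra hcon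
  push_neg at hcon
  have key : ∀ d i, 1 ≤ i → i + d = k →
      ∑ j ∈ Finset.Icc i k, xs' j < ∑ j ∈ Finset.Icc i k, xs j := by
    intro d
    induction d with
    | zero =>
      intro i hi hik
      have hikk : i = k := by omega
      subst hikk
      have hmem : i ∈ Finset.Icc 1 i := by simp [Finset.mem_Icc]; omega
      have h1 := hcon i hmem
      have h2 := heq i hmem
      rw [← h2] at h1
      simp only [perceived, if_pos rfl, if_true] at h1
      have : xs' i < xs i := by nlinarith
      simpa [Finset.Icc_self] using this
    | succ d ih =>
      intro i hi hik
      have hlt : i < k := by omega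
      have hik' : (i + 1) + d = k := by omega
      have IH := ih (i + 1) (by omega) hik'
      set A := ∑ j ∈ Finset.Icc (i + 1) k, xs j with hA
      set A' := ∑ j ∈ Finset.Icc (i + 1) k, xs' j with hA'
      have hA'0 : 0 ≤ A' := Finset.sum_nonneg fun j hj => by
        refine hxs' j ?_
        simp only [Finset.mem_Icc] at hj ⊢
        omega
      have hmem : i ∈ Finset.Icc 1 k := by simp [Finset.mem_Icc]; omega
      have h1 := hcon i hmem
      have h2 := heq i hmem
      rw [← h2] at h1
      have hne : i ≠ k := by omega
      simp only [perceived, if_neg hne, ← hA, ← hA'] at h1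
      -- Lipschitz bound on the min
      have hlip : min dw (A + dv) ≤ min dw (A' + dv) + (A - A') := by
        rcases min_cases dw (A' + dv) with ⟨h3, h4⟩ | ⟨h3, h4⟩
        · rw [h3]
          calc min dw (A + dv) ≤ dw := min_le_left _ _
          _ ≤ dw + (A - A') := by linarith
        · rw [h3]
          calc min dw (A + dv) ≤ A + dv := min_le_right _ _
          _ = A' + dv + (A - A') := by ring
      have hmain : xs' i + A' < xs i + A := by nlinarith
      have hsplit : ∀ f : ℕ → ℝ,
          ∑ j ∈ Finset.Icc i k, f j = f i + ∑ j ∈ Finset.Icc (i + 1) k, f j := by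
        intro f
        rw [Finset.Icc_eq_cons_Ioc (le_of_lt hlt), Finset.sum_cons, ← Finset.Icc_add_one_left_eq_Ioc]
      rw [hsplit xs, hsplit xs', ← hA, ← hA']
      linarith
  have := key (k - 1) 1 le_rfl (by omega)
  rw [hsum, hsum'] at this
  exact lt_irrefl x this
end

section
/- Fix b > 1, x > 0, d_v ≥ 0, d_w ≥ 0, integers 1 ≤ l ≤ k, and let C = (x₁,…,x_k) and C' = (x₁',…,x_k') be two lists of nonnegative reals (chunkings, possibly partial). For an index i < k define p(e_i; b) = b·x_i + min(d_w, ∑_{j>i} x_j + d_v), and p(e_k; b) = b·x_k + d_v (similarly for C'). If ∑_{i=l}^{k} x_i' > ∑_{i=l}^{k} x_i, then there exists an index i ∈ [l, k] such that for all b > 1, p(e_i'; b) > p(e_i; b). -/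
open Finset

lemma sum_Icc_split (k i : ℕ) (f : ℕ → ℝ) (h : i ≤ k) :
    (∑ j ∈ Finset.Icc i k, f j) = f i + ∑ j ∈ Finset.Icc (i + 1) k, f j := by
  rw [Finset.Icc_eq_cons_Ioc h, Finset.sum_cons, ← Finset.Icc_add_one_left_eq_Ioc]

lemma aux_pick (k : ℕ) (xs xs' : ℕ → ℝ) :
    ∀ n l, l ≤ k → k - l ≤ n →
    (∑ i ∈ Finset.Icc l k, xs i) < (∑ i ∈ Finset.Icc l k, xs' i) →
    ∃ i ∈ Finset.Icc l k, xs i < xs' i ∧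
      (∑ j ∈ Finset.Icc i k, xs j) ≤ (∑ j ∈ Finset.Icc i k, xs' j) := by
  intro n
  induction n with
  | zero =>
    intro l hlk hn hgt
    have hl : l = k := le_antisymm hlk (by omega)
    subst hl
    simp only [Finset.Icc_self, Finset.sum_singleton] at hgt ⊢
    exact ⟨l, by simp, hgt, by simpa using le_of_lt hgt⟩
  | succ n ih =>
    intro l hlk hn hgt
    by_cases hcase : xs l < xs' l
    · exact ⟨l, by simp [hlk], hcase, le_of_lt hgt⟩
    · push_neg at hcase
      rcases eq_or_lt_of_le hlk with heq | hlt
      · subst heq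
        simp only [Finset.Icc_self, Finset.sum_singleton] at hgt
        linarith
      · have h1 : l + 1 ≤ k := hlt
        have hs : (∑ i ∈ Finset.Icc (l+1) k, xs i) < ∑ i ∈ Finset.Icc (l+1) k, xs' i := by
          have := sum_Icc_split k l xs hlk
          have := sum_Icc_split k l xs' hlk
          linarith
        obtain ⟨i, hi, h2, h3⟩ := ih (l+1) h1 (by omega) hs
        refine ⟨i, ?_, h2, h3⟩
        simp only [Finset.mem_Icc] at hi ⊢
        omega

theorem stmt_7 (x dw dv : ℝ) (hx : 0 < x) (hdw : 0 ≤ dw) (hdv : 0 ≤ dv)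
    (k l : ℕ) (hl : 1 ≤ l) (hlk : l ≤ k)
    (xs xs' : ℕ → ℝ)
    (hxs : ∀ i ∈ Finset.Icc 1 k, 0 ≤ xs i)
    (hxs' : ∀ i ∈ Finset.Icc 1 k, 0 ≤ xs' i)
    (hgt : ∑ i ∈ Finset.Icc l k, xs i < ∑ i ∈ Finset.Icc l k, xs' i) :
    ∃ i ∈ Finset.Icc l k, ∀ b : ℝ, 1 < b →
      perceived b dw dv k xs i < perceived b dw dv k xs' i := by
  obtain ⟨i, hi, hδ, hD⟩ := aux_pick k xs xs' (k - l) l hlk le_rfl hgt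
  refine ⟨i, hi, fun b hb => ?_⟩
  have hik : i ≤ k := (Finset.mem_Icc.mp hi).2
  by_cases hik' : i = k
  · subst hik'
    simp only [perceived, eq_self_iff_true, if_true]
    nlinarith
  · have hik2 : i < k := lt_of_le_of_ne hik hik'
    simp only [perceived, if_neg hik']
    set s := ∑ j ∈ Finset.Icc (i+1) k, xs j with hs
    set s' := ∑ j ∈ Finset.Icc (i+1) k, xs' j with hs'
    have hsplit : xs i + s ≤ xs' i + s' := by
      have := sum_Icc_split k i xs hik
      have := sum_Icc_split k i xs' hik
      linarith
    rcases le_total s s' with h | h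
    · have hmin : min dw (s + dv) ≤ min dw (s' + dv) :=
        min_le_min le_rfl (by linarith)
      nlinarith
    · have hmin : min dw (s + dv) - (s - s') ≤ min dw (s' + dv) := by
        apply le_min
        · have := min_le_left dw (s + dv); linarith
        · have := min_le_right dw (s + dv); linarith
      nlinarith
end

section
/- Let b > 1, x > 0, d_v, d_w ≥ 0, δ := x + d_v - d_w with 0 < δ ≤ x, and integer τ with 1 ≤ τ ≤ k-1. Consider the chunking with x_i = δ/τ for i ≤ τ and the remaining cost x - δ distributed over the last k - τ chunks as x_{τ+j} = (x-δ)·(b-1)^{k-τ-j}·b^{j-1}/(b^{k-τ} - (b-1)^{k-τ}). Then: (i) for every i ≤ τ, the perceived cost b·x_i + d_w equals α := bδ/τ + d_w; (ii) for every i > τ, the perceived cost b·x_i + ∑_{j>i} x_j + d_v equals β := (x-δ)/(1 - ((b-1)/b)^{k-τ}) + d_v; (iii) moreover, α = bδ/τ + d_w also equals b·x_τ + ∑_{j>τ} x_j + d_v, i.e., the τ-th chunk's perceived cost computed through the chunked continuation also equals α. -/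
/-!
The tail weights `(b - 1) ^ (k - j) * b ^ (j - τ - 1)` sum, from `j = i + 1` to `k`, to
`b ^ (k - τ) - b ^ (i - τ) * (b - 1) ^ (k - i)` (a geometric sum with ratio `b / (b - 1)`), and
`b` times the `i`-th weight is exactly the subtracted term. So every tail chunk has perceived cost
`(x - δ) * b ^ (k - τ) / (b ^ (k - τ) - (b - 1) ^ (k - τ))`, and the whole tail costs `x - δ`,
which together with `x - δ + d_v = d_w` gives (iii).
-/

open Finset

-- `geom_sum₂_mul` with `b - (b - 1) = 1`.
lemma sum_Icc_sub_one_pow_mul_pow {R : Type*} [CommRing R] (b : R) {τ i k : ℕ}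
    (hτi : τ ≤ i) (hik : i ≤ k) :
    ∑ j ∈ Icc (i + 1) k, (b - 1) ^ (k - j) * b ^ (j - τ - 1)
      = b ^ (k - τ) - b ^ (i - τ) * (b - 1) ^ (k - i) := by
  obtain ⟨s, rfl⟩ := Nat.exists_eq_add_of_le hτi
  obtain ⟨n, rfl⟩ := Nat.exists_eq_add_of_le hik
  have hgeom : (∑ t ∈ range n, b ^ t * (b - 1) ^ (n - 1 - t)) = b ^ n - (b - 1) ^ n := by
    simpa using geom_sum₂_mul b (b - 1) n
  rw [← Ico_add_one_right_eq_Icc, sum_Ico_eq_sum_range]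
  calc ∑ t ∈ range (τ + s + n + 1 - (τ + s + 1)),
          (b - 1) ^ (τ + s + n - (τ + s + 1 + t)) * b ^ (τ + s + 1 + t - τ - 1)
      = b ^ s * ∑ t ∈ range n, b ^ t * (b - 1) ^ (n - 1 - t) := by
        rw [mul_sum, show τ + s + n + 1 - (τ + s + 1) = n by omega]
        refine sum_congr rfl fun t _ => ?_
        rw [show τ + s + n - (τ + s + 1 + t) = n - 1 - t by omega,
          show τ + s + 1 + t - τ - 1 = s + t by omega, pow_add]
        ring
    _ = b ^ (τ + s + n - τ) - b ^ (τ + s - τ) * (b - 1) ^ (τ + s + n - (τ + s)) := by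
        rw [hgeom, show τ + s + n - τ = s + n by omega, show τ + s - τ = s by omega,
          show τ + s + n - (τ + s) = n by omega, pow_add]
        ring

theorem stmt_11_general (b x dv dw : ℝ) (hb : 1 < b)
    (k τ : ℕ) (hτ1 : 1 ≤ τ) (hτk : τ ≤ k - 1)
    (δ : ℝ) (hδdef : δ = x + dv - dw)
    (xi : ℕ → ℝ)
    (hxi : ∀ i ∈ Finset.Icc 1 k,
      xi i = if i ≤ τ then δ / τ
        else (x - δ) * (b - 1) ^ (k - i) * b ^ (i - τ - 1)
              / (b ^ (k - τ) - (b - 1) ^ (k - τ))) :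
    (∀ i ∈ Finset.Icc 1 τ, b * xi i + dw = b * δ / τ + dw) ∧
    (∀ i ∈ Finset.Icc (τ + 1) k,
      b * xi i + (∑ j ∈ Finset.Icc (i + 1) k, xi j) + dv
        = (x - δ) / (1 - ((b - 1) / b) ^ (k - τ)) + dv) ∧
    (b * xi τ + (∑ j ∈ Finset.Icc (τ + 1) k, xi j) + dv = b * δ / τ + dw) := by
  set D := b ^ (k - τ) - (b - 1) ^ (k - τ) with hD_def
  have hD : D ≠ 0 := (sub_pos.2 <| pow_lt_pow_left₀ (by linarith) (by linarith) (by omega)).ne'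
  have hb0 : b ≠ 0 := by positivity
  have htail : ∀ i, τ ≤ i → i ≤ k →
      ∑ j ∈ Icc (i + 1) k, xi j = (x - δ) * (b ^ (k - τ) - b ^ (i - τ) * (b - 1) ^ (k - i)) / D := by
    intro i hτi hik
    rw [← sum_Icc_sub_one_pow_mul_pow b hτi hik, mul_sum, sum_div]
    refine sum_congr rfl fun j hj => ?_
    obtain ⟨hij, hjk⟩ := mem_Icc.1 hj
    rw [hxi j (mem_Icc.2 ⟨by omega, hjk⟩), if_neg (by omega), mul_assoc]
  refine ⟨fun i hi => ?_, fun i hi => ?_, ?_⟩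
  · obtain ⟨h1i, hiτ⟩ := mem_Icc.1 hi
    rw [hxi i (mem_Icc.2 ⟨h1i, by omega⟩), if_pos hiτ]
    ring
  · obtain ⟨hτi, hik⟩ := mem_Icc.1 hi
    have hratio : 1 - ((b - 1) / b) ^ (k - τ) = D / b ^ (k - τ) := by
      rw [div_pow, hD_def]
      field_simp
    have hpow : b ^ (i - τ) = b * b ^ (i - τ - 1) := by
      rw [← pow_succ']
      congr 1
      omega
    rw [hxi i (mem_Icc.2 ⟨by omega, hik⟩), if_neg (by omega), htail i (by omega) hik, hratio, hpow]
    field_simp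
    ring
  · rw [hxi τ (mem_Icc.2 ⟨hτ1, by omega⟩), if_pos le_rfl, htail τ le_rfl (by omega),
      Nat.sub_self, pow_zero, one_mul, mul_div_assoc, div_self hD, mul_one, hδdef]
    ring

theorem stmt_11 (b x dv dw : ℝ) (hb : 1 < b) (hx : 0 < x)
    (hdv : 0 ≤ dv) (hdw : 0 ≤ dw)
    (k τ : ℕ) (hτ1 : 1 ≤ τ) (hτk : τ ≤ k - 1) (hk : 2 ≤ k)
    (δ : ℝ) (hδdef : δ = x + dv - dw) (hδpos : 0 < δ) (hδle : δ ≤ x)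
    (xi : ℕ → ℝ)
    (hxi : ∀ i ∈ Finset.Icc 1 k,
      xi i = if i ≤ τ then δ / τ
        else (x - δ) * (b - 1) ^ (k - i) * b ^ (i - τ - 1)
              / (b ^ (k - τ) - (b - 1) ^ (k - τ))) :
    (∀ i ∈ Finset.Icc 1 τ, b * xi i + dw = b * δ / τ + dw) ∧
    (∀ i ∈ Finset.Icc (τ + 1) k,
      b * xi i + (∑ j ∈ Finset.Icc (i + 1) k, xi j) + dv
        = (x - δ) / (1 - ((b - 1) / b) ^ (k - τ)) + dv) ∧
    (b * xi τ + (∑ j ∈ Finset.Icc (τ + 1) k, xi j) + dv = b * δ / τ + dw) :=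
  stmt_11_general b x dv dw hb k τ hτ1 hτk δ hδdef xi hxi
end

section
/- Let b > 1, x > 0, c ≥ 0, k ≥ 2, and suppose (y₁,…,y_k) are nonnegative reals summing to x such that all perceived costs b·y_i + ∑_{j>i} y_j + c are equal to some common value P. Then P = x/(1 - ((b-1)/b)^k) + c and y₁ = x·(b-1)^{k-1}/(b^k - (b-1)^k). -/
/-!
Subtracting the equations at `i` and `i + 1` gives `y i = r * y (i + 1)` with `r = (b - 1) / b`,
so `y i = r ^ (k - i) * y k`. Summing this geometric series gives `x = b * (1 - r ^ k) * y k`,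
while the last equation reads `P = b * y k + c`; both formulas follow.
-/

open Finset

theorem mul_eq_sub_one_mul_succ_of_costs_eq {R : Type*} [CommRing R] {b c P : R} {y : ℕ → R}
    {i k : ℕ} (hik : i + 1 ≤ k)
    (hi : b * y i + ∑ j ∈ Icc (i + 1) k, y j + c = P)
    (hsucc : b * y (i + 1) + ∑ j ∈ Icc (i + 1 + 1) k, y j + c = P) :
    b * y i = (b - 1) * y (i + 1) := by
  rw [← add_sum_Ioc_eq_sum_Icc hik, ← Icc_add_one_left_eq_Ioc] at hi
  linear_combination hi - hsucc

theorem eq_pow_mul_of_eq_mul_succ {M : Type*} [Monoid M] {r : M} {y : ℕ → M} {m k : ℕ}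
    (h : ∀ i ∈ Ico m k, y i = r * y (i + 1)) : ∀ i ∈ Icc m k, y i = r ^ (k - i) * y k := by
  intro i hi
  rw [mem_Icc] at hi
  obtain ⟨hmi, hik⟩ := hi
  induction hik using Nat.decreasingInduction with
  | self => simp
  | of_succ i hik ih =>
    rw [h i (mem_Ico.mpr ⟨hmi, hik⟩), ih (by omega), ← mul_assoc, ← pow_succ',
      show k - (i + 1) + 1 = k - i by omega]

theorem sum_Icc_one_tsub_eq_sum_range {M : Type*} [AddCommMonoid M] (f : ℕ → M) (k : ℕ) :
    ∑ i ∈ Icc 1 k, f (k - i) = ∑ i ∈ range k, f i := by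
  rw [← Ico_add_one_right_eq_Icc, sum_Ico_reflect f 1 le_rfl, Nat.sub_self, Nat.add_sub_cancel,
    Nat.Ico_zero_eq_range]

theorem stmt_16_general (b x c : ℝ) (hb : 1 < b)
    (k : ℕ) (hk : 2 ≤ k)
    (y : ℕ → ℝ)
    (hsum : ∑ i ∈ Finset.Icc 1 k, y i = x)
    (P : ℝ)
    (heq : ∀ i ∈ Finset.Icc 1 k,
      b * y i + (∑ j ∈ Finset.Icc (i + 1) k, y j) + c = P) :
    P = x / (1 - ((b - 1) / b) ^ k) + c ∧
    y 1 = x * (b - 1) ^ (k - 1) / (b ^ k - (b - 1) ^ k) := by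
  have hb0 : b ≠ 0 := by positivity
  set r := (b - 1) / b with hr
  have hgeom : ∀ i ∈ Icc 1 k, y i = r ^ (k - i) * y k := by
    refine eq_pow_mul_of_eq_mul_succ fun i hi ↦ ?_
    have hik := mem_Ico.mp hi
    have hstep := mul_eq_sub_one_mul_succ_of_costs_eq hik.2 (heq i (by simp; omega))
      (heq (i + 1) (by simp; omega))
    rw [hr]
    field_simp
    linear_combination hstep
  have hx : x = b * (1 - r ^ k) * y k := by
    have hr1 : b * (r - 1) = -1 := by rw [hr]; field_simp; ring
    rw [← hsum, sum_congr rfl hgeom, ← sum_mul, sum_Icc_one_tsub_eq_sum_range (r ^ ·)]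
    linear_combination (-b * y k) * geom_sum_mul r k + (∑ i ∈ range k, r ^ i) * y k * hr1
  have hP : P = b * y k + c := by simpa using (heq k (by simp; omega)).symm
  constructor
  · have hrk : r ^ k < 1 :=
      pow_lt_one₀ (by positivity) ((div_lt_one (by positivity)).2 (by linarith)) (by omega)
    rw [hP, hx]
    field_simp [sub_ne_zero.mpr hrk.ne']
  · obtain ⟨m, rfl⟩ : ∃ m, k = m + 1 := ⟨k - 1, by omega⟩
    have hden : (b - 1) ^ (m + 1) < b ^ (m + 1) :=
      pow_lt_pow_left₀ (by linarith) (by linarith) (by omega)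
    rw [hgeom 1 (by simp), hx, hr, Nat.add_sub_cancel, div_pow, div_pow]
    field_simp [sub_ne_zero.mpr hden.ne']
    ring

theorem stmt_16 (b x c : ℝ) (hb : 1 < b) (hx : 0 < x) (hc : 0 ≤ c)
    (k : ℕ) (hk : 2 ≤ k)
    (y : ℕ → ℝ) (hy : ∀ i ∈ Finset.Icc 1 k, 0 ≤ y i)
    (hsum : ∑ i ∈ Finset.Icc 1 k, y i = x)
    (P : ℝ)
    (heq : ∀ i ∈ Finset.Icc 1 k,
      b * y i + (∑ j ∈ Finset.Icc (i + 1) k, y j) + c = P) :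
    P = x / (1 - ((b - 1) / b) ^ k) + c ∧
    y 1 = x * (b - 1) ^ (k - 1) / (b ^ k - (b - 1) ^ k) :=
  stmt_16_general b x c hb k hk y hsum P heq
end

section
/- Let b > 1, x > 0, d_v, d_w ≥ 0, 0 < δ := x + d_v - d_w ≤ x, and 1 ≤ τ ≤ k-1. Define α = bδ/τ + d_w and β = (x-δ)/(1 - ((b-1)/b)^{k-τ}) + d_v as in the initial τ-chunking. If α > β, then any chunking with nonnegative costs summing to x whose transition index is τ (i.e., ∑_{i≤τ} x_i ≥ δ and ∑_{i≤τ-1} x_i ≤ δ) has bottleneck (maximum perceived cost) at least α, where perceived costs are p_i = b·x_i + d_w for i ≤ τ, and p_i = b·x_i + ∑_{j>i} x_j + d_v for i > τ. -/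
open Finset

theorem stmt_19 (b x dv dw : ℝ) (hb : 1 < b) (hx : 0 < x)
    (hdv : 0 ≤ dv) (hdw : 0 ≤ dw)
    (k τ : ℕ) (hτ1 : 1 ≤ τ) (hτk : τ ≤ k - 1) (hk : 2 ≤ k)
    (δ : ℝ) (hδdef : δ = x + dv - dw) (hδpos : 0 < δ) (hδle : δ ≤ x)
    (α β : ℝ)
    (hα : α = b * δ / τ + dw)
    (hβ : β = (x - δ) / (1 - ((b - 1) / b) ^ (k - τ)) + dv)
    (hαβ : β < α)
    (xs : ℕ → ℝ)
    (hxs : ∀ i ∈ Finset.Icc 1 k, 0 ≤ xs i)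
    (hsum : ∑ i ∈ Finset.Icc 1 k, xs i = x)
    (htrans₁ : δ ≤ ∑ i ∈ Finset.Icc 1 τ, xs i)
    (htrans₂ : ∑ i ∈ Finset.Icc 1 (τ - 1), xs i ≤ δ)
    (p : ℕ → ℝ)
    (hp₁ : ∀ i ∈ Finset.Icc 1 τ, p i = b * xs i + dw)
    (hp₂ : ∀ i ∈ Finset.Icc (τ + 1) k,
      p i = b * xs i + (∑ j ∈ Finset.Icc (i + 1) k, xs j) + dv) :
    ∃ i ∈ Finset.Icc 1 k, α ≤ p i := by
  -- pigeonhole: some i in [1,τ] has xs i ≥ δ/τ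
  by_contra h
  push_neg at h
  have hτk' : τ ≤ k := le_trans hτk (Nat.sub_le k 1)
  have hcard : (Finset.Icc 1 τ).card = τ := by simp
  have hall : ∀ i ∈ Finset.Icc 1 τ, xs i < δ / τ := by
    intro i hi
    have hik : i ∈ Finset.Icc 1 k := by
      simp only [Finset.mem_Icc] at hi ⊢
      exact ⟨hi.1, le_trans hi.2 hτk'⟩
    have hpi := h i hik
    rw [hp₁ i hi, hα] at hpi
    have hb0 : (0:ℝ) < b := lt_trans one_pos hb
    have h1 : b * xs i < b * (δ / ↑τ) := by rw [mul_div_assoc] at hpi; linarith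
    exact lt_of_mul_lt_mul_left h1 (le_of_lt hb0)
  have hne : (Finset.Icc 1 τ).Nonempty := by
    rw [Finset.nonempty_Icc]; exact hτ1
  have hsumlt : ∑ i ∈ Finset.Icc 1 τ, xs i < ∑ i ∈ Finset.Icc 1 τ, (δ / τ) :=
    Finset.sum_lt_sum_of_nonempty hne hall
  rw [Finset.sum_const, hcard, nsmul_eq_mul] at hsumlt
  have hτpos : (0:ℝ) < τ := by exact_mod_cast hτ1
  rw [mul_div_cancel₀ δ (ne_of_gt hτpos)] at hsumlt
  linarith
end
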